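/- Let G be a connected claw-free cubic multigraph different from K4 with a diamond on a,b,c,d (ad not an edge), outside neighbours x of a and y of d. Let G' be obtained from G by deleting a,b,c,d and adding a new edge xy. Then G' is a connected claw-free cubic multigraph. -/

import Mathlib

/-- A multigraph on vertex set `V`: a symmetric edge-multiplicity function with no loops. -/
structure Multigraph (V : Type*) where
  mult : V → V → ℕ
  symm : ∀ u v, mult u v = mult v u
  loopless : ∀ v, mult v v = 0

namespace Multigraph

variable {V : Type*}

/-- Adjacency: distinct vertices joined by at least one edge. -/
def Adj (G : Multigraph V) (u v : V) : Prop := u ≠ v ∧ 0 < G.mult u v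

/-- The underlying simple graph. -/
def toSimple (G : Multigraph V) : SimpleGraph V where
  Adj u v := u ≠ v ∧ 0 < G.mult u v
  symm := ⟨fun u v h => ⟨h.1.symm, by rw [G.symm v u]; exact h.2⟩⟩
  loopless := ⟨fun v h => h.1 rfl⟩

def Connected (G : Multigraph V) : Prop := G.toSimple.Connected

section Fin
variable [Fintype V] [DecidableEq V]

/-- The degree of a vertex, counting edge multiplicities. -/
def degree (G : Multigraph V) (v : V) : ℕ := ∑ u, G.mult v u

def IsCubic (G : Multigraph V) : Prop := ∀ v, G.degree v = 3

end Fin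

variable [DecidableEq V]

/-- No induced claw `K_{1,3}` (centre `c`, leaves `a b d`). -/
def IsClawFree (G : Multigraph V) : Prop :=
  ¬ ∃ c a b d : V, c ≠ a ∧ c ≠ b ∧ c ≠ d ∧ a ≠ b ∧ a ≠ d ∧ b ≠ d ∧
      G.mult c a = 1 ∧ G.mult c b = 1 ∧ G.mult c d = 1 ∧
      G.mult a b = 0 ∧ G.mult a d = 0 ∧ G.mult b d = 0

/-- An induced triangle (cycle of length three, all sides simple edges). -/
def IsTriangle (G : Multigraph V) (a b c : V) : Prop :=
  a ≠ b ∧ a ≠ c ∧ b ≠ c ∧ G.mult a b = 1 ∧ G.mult a c = 1 ∧ G.mult b c = 1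

/-- A trumpet: a triangle whose side `ab` is a multiple edge. -/
def IsTrumpet (G : Multigraph V) (a b c : V) : Prop :=
  a ≠ b ∧ a ≠ c ∧ b ≠ c ∧ G.mult a b = 2 ∧ G.mult a c = 1 ∧ G.mult b c = 1

/-- A digon: two vertices joined by parallel edges. -/
def IsDigon (G : Multigraph V) (u v : V) : Prop := u ≠ v ∧ 2 ≤ G.mult u v

/-- A diamond: an induced `K₄` minus the edge `ad`. -/
def IsDiamond (G : Multigraph V) (a b c d : V) : Prop :=
  a ≠ b ∧ a ≠ c ∧ a ≠ d ∧ b ≠ c ∧ b ≠ d ∧ c ≠ d ∧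
  G.mult a d = 0 ∧ G.mult a b = 1 ∧ G.mult a c = 1 ∧ G.mult b c = 1 ∧
  G.mult b d = 1 ∧ G.mult c d = 1

/-- The vertex sets of the diamonds of `G`. -/
def diamondSets (G : Multigraph V) : Set (Finset V) :=
  {s | ∃ a b c d, s = {a, b, c, d} ∧ G.IsDiamond a b c d}

/-- The number of diamonds of `G`. -/
noncomputable def diamondCount (G : Multigraph V) : ℕ := G.diamondSets.ncard

/-- The vertex sets of the digons of `G` that are not the multiple side of a trumpet. -/
def digonSets (G : Multigraph V) : Set (Finset V) :=
  {s | ∃ u v, s = {u, v} ∧ G.IsDigon u v ∧ ∀ w, ¬ G.IsTrumpet u v w}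

/-- The number of digons of `G` (not counting those inside trumpets). -/
noncomputable def digonCount (G : Multigraph V) : ℕ := G.digonSets.ncard

/-- `G` is (isomorphic to) the simple complete graph `K₄`. -/
def IsK4 (G : Multigraph V) : Prop :=
  Nonempty (G.toSimple ≃g (⊤ : SimpleGraph (Fin 4))) ∧ ∀ u v, G.mult u v ≤ 1

section Bisection
variable [Fintype V]

/-- A bisection: the two parts `B` and `Bᶜ` have the same size. -/
def IsBisection (G : Multigraph V) (B : Finset V) : Prop := B.card = Bᶜ.card

/-- The number of monochromatic edges inside the part `B` (with multiplicity). -/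
def monoEdges (G : Multigraph V) (B : Finset V) : ℕ :=
  (∑ u ∈ B, ∑ v ∈ B, G.mult u v) / 2

/-- The total number of monochromatic edges of the bisection `(B, Bᶜ)`. -/
def epsilon (G : Multigraph V) (B : Finset V) : ℕ := G.monoEdges B + G.monoEdges Bᶜ

/-- The simple graph induced by `G` on the part `B`. -/
def inducedSimple (G : Multigraph V) (B : Finset V) : SimpleGraph V where
  Adj u v := u ≠ v ∧ u ∈ B ∧ v ∈ B ∧ 0 < G.mult u v
  symm := ⟨fun u v h => ⟨h.1.symm, h.2.2.1, h.2.1, by rw [G.symm v u]; exact h.2.2.2⟩⟩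
  loopless := ⟨fun v h => h.1 rfl⟩

/-- Every monochromatic component inside `B` has at most `k` vertices. -/
def SmallComponents (G : Multigraph V) (B : Finset V) (k : ℕ) : Prop :=
  ∀ v ∈ B, {u | (G.inducedSimple B).Reachable v u}.ncard ≤ k

/-- A `k`-bisection. -/
def IsKBisection (G : Multigraph V) (B : Finset V) (k : ℕ) : Prop :=
  G.IsBisection B ∧ G.SmallComponents B k ∧ G.SmallComponents Bᶜ k

/-- A desired bisection: (DB1) exactly one monochromatic edge per triangle, (DB2) every
monochromatic edge lies in a triangle, (DB3) exactly one monochromatic edge per diamond,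
(DB4) no multiple edge is monochromatic. -/
def IsDesired (G : Multigraph V) (B : Finset V) : Prop :=
  G.IsBisection B ∧
  (∀ a b c, G.IsTriangle a b c →
    (({(a, b), (a, c), (b, c)} : Finset (V × V)).filter
      (fun e => e.1 ∈ B ↔ e.2 ∈ B)).card = 1) ∧
  (∀ u v, G.Adj u v → (u ∈ B ↔ v ∈ B) → ∃ w, G.IsTriangle u v w) ∧
  (∀ a b c d, G.IsDiamond a b c d →
    (({(a, b), (a, c), (b, c), (b, d), (c, d)} : Finset (V × V)).filter
      (fun e => e.1 ∈ B ↔ e.2 ∈ B)).card = 1) ∧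
  (∀ u v, 2 ≤ G.mult u v → ¬ (u ∈ B ↔ v ∈ B))

end Bisection

end Multigraph

namespace Multigraph

variable {V : Type*} [DecidableEq V]

/-- Delete all edges between `x` and `y`. -/
def deleteEdge (G : Multigraph V) (x y : V) : Multigraph V where
  mult u v := if (u = x ∧ v = y) ∨ (u = y ∧ v = x) then 0 else G.mult u v
  symm := by
    intro u v
    have hsy := G.symm u v
    by_cases h : (u = x ∧ v = y) ∨ (u = y ∧ v = x)
    · have h' : (v = x ∧ u = y) ∨ (v = y ∧ u = x) := by tauto
      simp [h, h']
    · have h' : ¬ ((v = x ∧ u = y) ∨ (v = y ∧ u = x)) := by tauto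
      simp [h, h', hsy]
  loopless := by
    intro v
    by_cases h : (v = x ∧ v = y) ∨ (v = y ∧ v = x) <;> simp [h, G.loopless]

/-- The diamond reduction: delete the diamond vertices `a b c d` and add one new edge
between the outside neighbours `x` and `y`. -/
def diamondReduce (G : Multigraph V) (a b c d x y : V) :
    Multigraph {v : V // v ∉ ({a, b, c, d} : Finset V)} where
  mult u v := if u.1 ≠ v.1 ∧ ((u.1 = x ∧ v.1 = y) ∨ (u.1 = y ∧ v.1 = x))
    then G.mult u.1 v.1 + 1 else G.mult u.1 v.1
  symm := by
    intro u v
    have hsy := G.symm u.1 v.1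
    by_cases h : u.1 ≠ v.1 ∧ ((u.1 = x ∧ v.1 = y) ∨ (u.1 = y ∧ v.1 = x))
    · have h' : v.1 ≠ u.1 ∧ ((v.1 = x ∧ u.1 = y) ∨ (v.1 = y ∧ u.1 = x)) := by tauto
      simp [h, h', hsy]
    · have h' : ¬ (v.1 ≠ u.1 ∧ ((v.1 = x ∧ u.1 = y) ∨ (v.1 = y ∧ u.1 = x))) := by tauto
      simp [h, h', hsy]
  loopless := by
    intro v
    simp [G.loopless]

/-- A ring of two diamonds: two vertex-disjoint diamonds covering all of `V`, joined
cyclically by two edges between their degree-2 vertices. -/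
def IsRingOfTwoDiamonds (G : Multigraph V) : Prop :=
  ∃ a₁ b₁ c₁ d₁ a₂ b₂ c₂ d₂ : V,
    ([a₁, b₁, c₁, d₁, a₂, b₂, c₂, d₂] : List V).Nodup ∧
    (∀ v : V, v ∈ [a₁, b₁, c₁, d₁, a₂, b₂, c₂, d₂]) ∧
    G.IsDiamond a₁ b₁ c₁ d₁ ∧ G.IsDiamond a₂ b₂ c₂ d₂ ∧
    G.mult d₁ a₂ = 1 ∧ G.mult d₂ a₁ = 1

end Multigraph

/-!
In a cubic graph the middle vertices `b`, `c` of a diamond have no edges leaving it, while `a`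
and `d` have exactly one each, to `x` and to `y`. Were `x = y`, then `x` with `a`, `d` and its
third neighbour would span a claw; so `x ≠ y`, and the new edge `xy` restores all degrees.
Collapsing the diamond onto `x` sends every edge of `G` into a connected part of `G'`, so `G'`
is connected. A claw of `G'` centred away from `x` and `y` is a claw of `G`; one centred at `x`
has two leaves other than `y`, non-adjacent neighbours of `x` in `G`, which form a claw of `G`
with `a` (symmetrically at `y`, with `d`).
-/

theorem SimpleGraph.Connected.of_surjective_of_adj_reachable {V W : Type*}
    {G : SimpleGraph V} {H : SimpleGraph W} (hG : G.Connected) (f : V → W)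
    (hf : Function.Surjective f) (hadj : ∀ u v, G.Adj u v → H.Reachable (f u) (f v)) :
    H.Connected := by
  have : Nonempty W := hG.nonempty.map f
  refine ⟨hf.forall₂.2 fun u v => ?_⟩
  obtain ⟨p⟩ := hG.preconnected u v
  induction p with
  | nil => rfl
  | cons h _ ih => exact (hadj _ _ h).trans ih

theorem sum_ite_and_coe_eq {V : Type*} [Fintype V] [DecidableEq V] {S : Finset V} {y : V}
    (hy : y ∉ S) (p : Prop) [Decidable p] :
    ∑ u : {v // v ∉ S}, (if p ∧ u.1 = y then 1 else 0) = if p then 1 else 0 := by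
  by_cases hp : p
  · have : ∀ u : {v // v ∉ S}, u.1 = y ↔ u = ⟨y, hy⟩ := fun u =>
      (Subtype.ext_iff (a2 := ⟨y, hy⟩)).symm
    simp [hp, this]
  · simp [hp]

namespace Multigraph

variable {V : Type*}

section Degree

variable [Fintype V] (G : Multigraph V)

theorem sum_mult_le_degree (v : V) (s : Finset V) : ∑ u ∈ s, G.mult v u ≤ G.degree v :=
  Finset.sum_le_univ_sum_of_nonneg fun _ => Nat.zero_le _

variable [DecidableEq V]

theorem mult_add_mult_add_mult_add_mult_le_degree {v p q r w : V} (hpq : p ≠ q) (hpr : p ≠ r)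
    (hpw : p ≠ w) (hqr : q ≠ r) (hqw : q ≠ w) (hrw : r ≠ w) :
    G.mult v p + G.mult v q + G.mult v r + G.mult v w ≤ G.degree v := by
  have := G.sum_mult_le_degree v {p, q, r, w}
  rwa [Finset.sum_insert (by simp [hpq, hpr, hpw]), Finset.sum_insert (by simp [hqr, hqw]),
    Finset.sum_pair hrw, ← add_assoc, ← add_assoc] at this

theorem exists_mult_pos_of_sum_lt_degree {v : V} {s : Finset V}
    (h : ∑ u ∈ s, G.mult v u < G.degree v) : ∃ u ∉ s, 0 < G.mult v u := by
  rw [degree, ← Finset.sum_add_sum_compl s] at h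
  obtain ⟨u, hu, hpos⟩ := Finset.exists_ne_zero_of_sum_ne_zero (f := G.mult v) (s := sᶜ)
    (by omega)
  exact ⟨u, Finset.mem_compl.1 hu, Nat.pos_of_ne_zero hpos⟩

theorem degree_eq_sum_add_sum_subtype (v : V) (s : Finset V) :
    G.degree v = ∑ u ∈ s, G.mult v u + ∑ u : {u // u ∉ s}, G.mult v u := by
  rw [degree, ← Fintype.sum_subtype_add_sum_subtype (· ∈ s),
    Finset.sum_subtype s (fun _ => Iff.rfl)]

end Degree

section Claw

def IsClaw (G : Multigraph V) (c a b d : V) : Prop :=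
  c ≠ a ∧ c ≠ b ∧ c ≠ d ∧ a ≠ b ∧ a ≠ d ∧ b ≠ d ∧
    G.mult c a = 1 ∧ G.mult c b = 1 ∧ G.mult c d = 1 ∧
    G.mult a b = 0 ∧ G.mult a d = 0 ∧ G.mult b d = 0

variable {G : Multigraph V}

theorem isClawFree_iff : G.IsClawFree ↔ ∀ c a b d, ¬ G.IsClaw c a b d := by
  simp only [IsClawFree, IsClaw, not_exists]

theorem IsClaw.exists_two_leaves_ne {c p q r : V} (h : G.IsClaw c p q r) (y : V) :
    ∃ l₁ l₂, l₁ ≠ l₂ ∧ l₁ ≠ y ∧ l₂ ≠ y ∧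
      G.mult c l₁ = 1 ∧ G.mult c l₂ = 1 ∧ G.mult l₁ l₂ = 0 := by
  obtain ⟨-, -, -, hpq, hpr, hqr, hp, hq, hr, mpq, mpr, mqr⟩ := h
  by_cases hpy : p = y
  · subst hpy; exact ⟨q, r, hqr, hpq.symm, hpr.symm, hq, hr, mqr⟩
  by_cases hqy : q = y
  · subst hqy; exact ⟨p, r, hpr, hpy, hqr.symm, hp, hr, mpr⟩
  · exact ⟨p, q, hpq, hpy, hqy, hp, hq, mpq⟩

end Claw

section Diamond

variable {G : Multigraph V} {a b c d x : V}

theorem IsDiamond.swap_mid (h : G.IsDiamond a b c d) : G.IsDiamond a c b d := by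
  obtain ⟨hab, hac, had, hbc, hbd, hcd, mad, mab, mac, mbc, mbd, mcd⟩ := h
  exact ⟨hac, hab, had, hbc.symm, hcd, hbd, mad, mac, mab, G.symm b c ▸ mbc, mcd, mbd⟩

theorem IsDiamond.reverse (h : G.IsDiamond a b c d) : G.IsDiamond d c b a := by
  obtain ⟨hab, hac, had, hbc, hbd, hcd, mad, mab, mac, mbc, mbd, mcd⟩ := h
  exact ⟨hcd.symm, hbd.symm, had.symm, hbc.symm, hac.symm, hab.symm, G.symm a d ▸ mad,
    G.symm c d ▸ mcd, G.symm b d ▸ mbd, G.symm b c ▸ mbc, G.symm a c ▸ mac, G.symm a b ▸ mab⟩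

theorem IsDiamond.ne_of_adj (h : G.IsDiamond a b c d) (hx : G.Adj a x) : x ≠ d := by
  obtain ⟨-, -, -, -, -, -, mad, -⟩ := h
  rintro rfl
  exact (Nat.lt_irrefl 0) (mad ▸ hx.2)

variable [Fintype V] [DecidableEq V]

theorem IsCubic.mult_diamond_mid_eq_zero (hG : G.IsCubic) (h : G.IsDiamond a b c d) {w : V}
    (hwa : w ≠ a) (hwc : w ≠ c) (hwd : w ≠ d) : G.mult b w = 0 := by
  obtain ⟨-, hac, had, -, -, hcd, -, mab, -, mbc, mbd, -⟩ := h
  have := G.mult_add_mult_add_mult_add_mult_le_degree (v := b) hac had hwa.symm hcd hwc.symm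
    hwd.symm
  rw [G.symm b a, mab, mbc, mbd, hG b] at this
  omega

theorem IsCubic.mult_diamond_end_eq_one (hG : G.IsCubic) (h : G.IsDiamond a b c d)
    (hx : G.Adj a x) (hxb : x ≠ b) (hxc : x ≠ c) : G.mult a x = 1 := by
  have hxd := h.ne_of_adj hx
  obtain ⟨-, -, -, hbc, hbd, hcd, mad, mab, mac, -⟩ := h
  have := G.mult_add_mult_add_mult_add_mult_le_degree (v := a) hbc hxb.symm hbd hxc.symm hcd
    hxd
  rw [mab, mac, mad, hG a] at this
  have := hx.2
  omega

theorem IsCubic.mult_diamond_end_eq_zero (hG : G.IsCubic) (h : G.IsDiamond a b c d)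
    (hx : G.Adj a x) (hxb : x ≠ b) (hxc : x ≠ c) {w : V} (hwb : w ≠ b) (hwc : w ≠ c)
    (hwx : w ≠ x) : G.mult a w = 0 := by
  obtain ⟨-, -, -, hbc, -, -, -, mab, mac, -⟩ := h
  have := G.mult_add_mult_add_mult_add_mult_le_degree (v := a) hbc hxb.symm hwb.symm hxc.symm
    hwc.symm hwx.symm
  rw [mab, mac, hG a] at this
  have := hx.2
  omega

theorem IsCubic.mult_mid_eq_zero_of_adj_end (hG : G.IsCubic) (h : G.IsDiamond a b c d)
    (hx : G.Adj a x) (hxb : x ≠ b) (hxc : x ≠ c) : G.mult x b = 0 ∧ G.mult x c = 0 := by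
  have hxd := h.ne_of_adj hx
  exact ⟨G.symm x b ▸ hG.mult_diamond_mid_eq_zero h hx.1.symm hxc hxd,
    G.symm x c ▸ hG.mult_diamond_mid_eq_zero h.swap_mid hx.1.symm hxb hxd⟩

theorem IsClawFree.mult_pos_of_diamond_end (hclaw : G.IsClawFree) (hG : G.IsCubic)
    (h : G.IsDiamond a b c d) (hx : G.Adj a x) (hxb : x ≠ b) (hxc : x ≠ c) {p q : V}
    (hpq : p ≠ q) (hpa : p ≠ a) (hqa : q ≠ a) (hp : G.mult x p = 1) (hq : G.mult x q = 1) :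
    0 < G.mult p q := by
  obtain ⟨hxb0, hxc0⟩ := hG.mult_mid_eq_zero_of_adj_end h hx hxb hxc
  have hxw {w : V} (hw : G.mult x w = 1) : w ≠ b ∧ w ≠ c ∧ w ≠ x := by
    refine ⟨?_, ?_, ?_⟩ <;> rintro rfl <;> simp_all [G.loopless]
  have ha {w : V} (hw : G.mult x w = 1) : G.mult a w = 0 :=
    hG.mult_diamond_end_eq_zero h hx hxb hxc (hxw hw).1 (hxw hw).2.1 (hxw hw).2.2
  by_contra! h0
  exact isClawFree_iff.1 hclaw x a p q ⟨hx.1.symm, (hxw hp).2.2.symm, (hxw hq).2.2.symm,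
    hpa.symm, hqa.symm, hpq, G.symm x a ▸ hG.mult_diamond_end_eq_one h hx hxb hxc, hp, hq,
    ha hp, ha hq, Nat.le_zero.1 h0⟩

theorem IsClawFree.ne_of_diamond (hclaw : G.IsClawFree) (hG : G.IsCubic)
    (h : G.IsDiamond a b c d) (hx : G.Adj a x) (hxb : x ≠ b) (hxc : x ≠ c) {y : V}
    (hy : G.Adj d y) (hyb : y ≠ b) (hyc : y ≠ c) : x ≠ y := by
  rintro rfl
  have ⟨hab, _, had, _, hbd, _⟩ := h
  have hax := G.symm x a ▸ hG.mult_diamond_end_eq_one h hx hxb hxc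
  have hdx := G.symm x d ▸ hG.mult_diamond_end_eq_one h.reverse hy hxc hxb
  have hxb0 := (hG.mult_mid_eq_zero_of_adj_end h hx hxb hxc).1
  have hxc0 := (hG.mult_mid_eq_zero_of_adj_end h hx hxb hxc).2
  obtain ⟨z, hz, hxz⟩ : ∃ z ∉ ({a, d} : Finset V), 0 < G.mult x z := by
    refine G.exists_mult_pos_of_sum_lt_degree ?_
    rw [Finset.sum_pair had, hax, hdx, hG x]
    omega
  simp only [Finset.mem_insert, Finset.mem_singleton, not_or] at hz
  have hzb : z ≠ b := by rintro rfl; omega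
  have hzc : z ≠ c := by rintro rfl; omega
  have hzx : z ≠ x := by rintro rfl; simp [G.loopless] at hxz
  have := G.mult_add_mult_add_mult_add_mult_le_degree (v := x) had (Ne.symm hz.1) hab
    (Ne.symm hz.2) hbd.symm hzb
  rw [hax, hdx, hxb0, hG x] at this
  have := hclaw.mult_pos_of_diamond_end hG h hx hxb hxc (Ne.symm hz.2) had.symm hz.1 hdx
    (by omega)
  rw [hG.mult_diamond_end_eq_zero h.reverse hy hxc hxb hzc hzb hzx] at this
  omega

theorem IsCubic.eq_or_eq_of_diamond_of_mult_pos (hG : G.IsCubic) (h : G.IsDiamond a b c d)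
    (hx : G.Adj a x) (hxb : x ≠ b) (hxc : x ≠ c) {y : V} (hy : G.Adj d y) (hyb : y ≠ b)
    (hyc : y ≠ c) {u v : V} (hu : u ∈ ({a, b, c, d} : Finset V))
    (hv : v ∉ ({a, b, c, d} : Finset V)) (huv : 0 < G.mult u v) : v = x ∨ v = y := by
  simp only [Finset.mem_insert, Finset.mem_singleton, not_or] at hu hv
  obtain ⟨hva, hvb, hvc, hvd⟩ := hv
  by_contra! hvxy
  have := hG.mult_diamond_end_eq_zero h hx hxb hxc hvb hvc hvxy.1
  have := hG.mult_diamond_end_eq_zero h.reverse hy hyc hyb hvc hvb hvxy.2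
  have := hG.mult_diamond_mid_eq_zero h hva hvc hvd
  have := hG.mult_diamond_mid_eq_zero h.swap_mid hva hvb hvd
  rcases hu with rfl | rfl | rfl | rfl <;> omega

end Diamond

section Reduce

variable {G : Multigraph V} {a b c d : V} [DecidableEq V]

theorem diamondReduce_comm (x y : V) :
    G.diamondReduce a b c d x y = G.diamondReduce a b c d y x := by
  simp only [diamondReduce, or_comm]

theorem diamondReduce_mult {x y : V} (hxy : x ≠ y)
    (u v : {v : V // v ∉ ({a, b, c, d} : Finset V)}) :
    (G.diamondReduce a b c d x y).mult u v =
      G.mult u v + (if u.1 = x ∧ v.1 = y then 1 else 0) + (if u.1 = y ∧ v.1 = x then 1 else 0) := by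
  simp only [diamondReduce]
  split_ifs <;> grind

theorem mult_le_diamondReduce_mult (x y : V) (u v : {v : V // v ∉ ({a, b, c, d} : Finset V)}) :
    G.mult u v ≤ (G.diamondReduce a b c d x y).mult u v := by
  simp only [diamondReduce]
  split_ifs <;> omega

theorem diamondReduce_mult_of_ne {x y : V} {u : {v : V // v ∉ ({a, b, c, d} : Finset V)}}
    (hux : u.1 ≠ x) (huy : u.1 ≠ y) (v : {v : V // v ∉ ({a, b, c, d} : Finset V)}) :
    (G.diamondReduce a b c d x y).mult u v = G.mult u v := by
  simp [diamondReduce, hux, huy]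

theorem IsClaw.of_diamondReduce {x y : V} {C P Q R : {v : V // v ∉ ({a, b, c, d} : Finset V)}}
    (hCx : C.1 ≠ x) (hCy : C.1 ≠ y) (h : (G.diamondReduce a b c d x y).IsClaw C P Q R) :
    G.IsClaw C P Q R := by
  obtain ⟨hCP, hCQ, hCR, hPQ, hPR, hQR, mP, mQ, mR, mPQ, mPR, mQR⟩ := h
  simp only [diamondReduce_mult_of_ne hCx hCy] at mP mQ mR
  refine ⟨Subtype.val_injective.ne hCP, Subtype.val_injective.ne hCQ, Subtype.val_injective.ne hCR,
    Subtype.val_injective.ne hPQ, Subtype.val_injective.ne hPR, Subtype.val_injective.ne hQR,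
    mP, mQ, mR, ?_, ?_, ?_⟩
  · exact Nat.le_zero.1 (mPQ ▸ mult_le_diamondReduce_mult x y P Q)
  · exact Nat.le_zero.1 (mPR ▸ mult_le_diamondReduce_mult x y P R)
  · exact Nat.le_zero.1 (mQR ▸ mult_le_diamondReduce_mult x y Q R)

theorem diamondReduce_reachable {x y : V} (hxo : x ∉ ({a, b, c, d} : Finset V))
    (hyo : y ∉ ({a, b, c, d} : Finset V)) :
    (G.diamondReduce a b c d x y).toSimple.Reachable ⟨x, hxo⟩ ⟨y, hyo⟩ := by
  by_cases hxy : x = y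
  · subst hxy; rfl
  refine SimpleGraph.Adj.reachable ⟨fun h => hxy (congrArg Subtype.val h), ?_⟩
  rw [diamondReduce_mult hxy]
  simp

theorem diamondReduce_not_isClaw {x y : V} (hxy : x ≠ y) (hyo : y ∉ ({a, b, c, d} : Finset V))
    (hx_nbrs : ∀ p q : V, p ∉ ({a, b, c, d} : Finset V) → q ∉ ({a, b, c, d} : Finset V) →
      p ≠ q → G.mult x p = 1 → G.mult x q = 1 → 0 < G.mult p q)
    {C P Q R : {v : V // v ∉ ({a, b, c, d} : Finset V)}} (hC : C.1 = x) :
    ¬ (G.diamondReduce a b c d x y).IsClaw C P Q R := by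
  intro hclaw
  obtain ⟨l₁, l₂, hl, hl₁, hl₂, m₁, m₂, m₁₂⟩ := hclaw.exists_two_leaves_ne ⟨y, hyo⟩
  have hl₁ : l₁.1 ≠ y := fun h => hl₁ (Subtype.ext h)
  have hl₂ : l₂.1 ≠ y := fun h => hl₂ (Subtype.ext h)
  simp only [diamondReduce_mult hxy, hC, hxy, hl₁, hl₂, true_and, false_and,
    if_false, add_zero] at m₁ m₂ m₁₂
  have := hx_nbrs l₁ l₂ l₁.2 l₂.2 (fun h => hl (Subtype.ext h)) m₁ m₂
  omega

variable [Fintype V]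

theorem IsCubic.diamondReduce (hG : G.IsCubic) (h : G.IsDiamond a b c d) {x y : V}
    (hx : G.Adj a x) (hxo : x ∉ ({a, b, c, d} : Finset V))
    (hy : G.Adj d y) (hyo : y ∉ ({a, b, c, d} : Finset V)) (hxy : x ≠ y) :
    (G.diamondReduce a b c d x y).IsCubic := by
  intro v
  obtain ⟨-, hxb, hxc, -⟩ : x ≠ a ∧ x ≠ b ∧ x ≠ c ∧ x ≠ d := by simpa using hxo
  obtain ⟨-, hyb, hyc, -⟩ : y ≠ a ∧ y ≠ b ∧ y ≠ c ∧ y ≠ d := by simpa using hyo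
  obtain ⟨hva, hvb, hvc, hvd⟩ : v.1 ≠ a ∧ v.1 ≠ b ∧ v.1 ≠ c ∧ v.1 ≠ d := by simpa using v.2
  have hvxa : G.mult v a = if v.1 = x then 1 else 0 := by
    rw [G.symm]
    split_ifs with hvx
    · exact hvx ▸ hG.mult_diamond_end_eq_one h hx hxb hxc
    · exact hG.mult_diamond_end_eq_zero h hx hxb hxc hvb hvc hvx
  have hvyd : G.mult v d = if v.1 = y then 1 else 0 := by
    rw [G.symm]
    split_ifs with hvy
    · exact hvy ▸ hG.mult_diamond_end_eq_one h.reverse hy hyc hyb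
    · exact hG.mult_diamond_end_eq_zero h.reverse hy hyc hyb hvc hvb hvy
  have hvb0 := G.symm v b ▸ hG.mult_diamond_mid_eq_zero h hva hvc hvd
  have hvc0 := G.symm v c ▸ hG.mult_diamond_mid_eq_zero h.swap_mid hva hvb hvd
  obtain ⟨hab, hac, had, hbc, hbd, hcd, -⟩ := h
  have hdeg := G.degree_eq_sum_add_sum_subtype v {a, b, c, d}
  rw [Finset.sum_insert (by simp [hab, hac, had]), Finset.sum_insert (by simp [hbc, hbd]),
    Finset.sum_pair hcd, hvxa, hvb0, hvc0, hvyd, hG v] at hdeg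
  simp only [degree, G.diamondReduce_mult hxy, Finset.sum_add_distrib, sum_ite_and_coe_eq hyo,
    sum_ite_and_coe_eq hxo]
  omega

theorem IsCubic.connected_diamondReduce (hG : G.IsCubic) (hconn : G.Connected)
    (h : G.IsDiamond a b c d) {x y : V} (hx : G.Adj a x) (hxo : x ∉ ({a, b, c, d} : Finset V))
    (hy : G.Adj d y) (hyo : y ∉ ({a, b, c, d} : Finset V)) :
    (G.diamondReduce a b c d x y).Connected := by
  set G' := G.diamondReduce a b c d x y
  have reach_x (w : {v : V // v ∉ ({a, b, c, d} : Finset V)}) (hw : w.1 = x ∨ w.1 = y) :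
      G'.toSimple.Reachable ⟨x, hxo⟩ w := by
    obtain rfl | rfl := hw
    · rfl
    · exact diamondReduce_reachable hxo w.2
  let f : V → {v : V // v ∉ ({a, b, c, d} : Finset V)} := fun v =>
    if hv : v ∈ ({a, b, c, d} : Finset V) then ⟨x, hxo⟩ else ⟨v, hv⟩
  have hf_in {v : V} (hv : v ∈ ({a, b, c, d} : Finset V)) : f v = ⟨x, hxo⟩ := dif_pos hv
  have hf_out {v : V} (hv : v ∉ ({a, b, c, d} : Finset V)) : f v = ⟨v, hv⟩ := dif_neg hv
  refine SimpleGraph.Connected.of_surjective_of_adj_reachable hconn f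
    (fun w => ⟨w.1, hf_out w.2⟩) fun u v huv => ?_
  obtain ⟨-, hxb, hxc, -⟩ : x ≠ a ∧ x ≠ b ∧ x ≠ c ∧ x ≠ d := by simpa using hxo
  obtain ⟨-, hyb, hyc, -⟩ : y ≠ a ∧ y ≠ b ∧ y ≠ c ∧ y ≠ d := by simpa using hyo
  have h_out {u v : V} (hu : u ∈ ({a, b, c, d} : Finset V)) (hv : v ∉ ({a, b, c, d} : Finset V))
      (huv : 0 < G.mult u v) : G'.toSimple.Reachable (f u) (f v) := by
    rw [hf_in hu, hf_out hv]
    exact reach_x _ (hG.eq_or_eq_of_diamond_of_mult_pos h hx hxb hxc hy hyb hyc hu hv huv)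
  obtain ⟨hne, hpos⟩ := huv
  by_cases hu : u ∈ ({a, b, c, d} : Finset V) <;> by_cases hv : v ∈ ({a, b, c, d} : Finset V)
  · rw [hf_in hu, hf_in hv]
  · exact h_out hu hv hpos
  · exact (h_out hv hu (G.symm u v ▸ hpos)).symm
  · rw [hf_out hu, hf_out hv]
    exact SimpleGraph.Adj.reachable ⟨fun h => hne (congrArg Subtype.val h),
      hpos.trans_le (mult_le_diamondReduce_mult x y ⟨u, hu⟩ ⟨v, hv⟩)⟩

theorem IsClawFree.diamondReduce (hclaw : G.IsClawFree) (hG : G.IsCubic)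
    (h : G.IsDiamond a b c d) {x y : V} (hx : G.Adj a x) (hxo : x ∉ ({a, b, c, d} : Finset V))
    (hy : G.Adj d y) (hyo : y ∉ ({a, b, c, d} : Finset V)) :
    (G.diamondReduce a b c d x y).IsClawFree := by
  obtain ⟨-, hxb, hxc, -⟩ : x ≠ a ∧ x ≠ b ∧ x ≠ c ∧ x ≠ d := by simpa using hxo
  obtain ⟨-, hyb, hyc, -⟩ : y ≠ a ∧ y ≠ b ∧ y ≠ c ∧ y ≠ d := by simpa using hyo
  have hxy := hclaw.ne_of_diamond hG h hx hxb hxc hy hyb hyc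
  refine isClawFree_iff.2 fun C P Q R hC => ?_
  by_cases hCx : C.1 = x
  · refine diamondReduce_not_isClaw hxy hyo (fun p q hp _ hpq => ?_) hCx hC
    exact hclaw.mult_pos_of_diamond_end hG h hx hxb hxc hpq (by grind) (by grind)
  by_cases hCy : C.1 = y
  · rw [diamondReduce_comm] at hC
    refine diamondReduce_not_isClaw hxy.symm hxo (fun p q hp hq hpq => ?_) hCy hC
    exact hclaw.mult_pos_of_diamond_end hG h.reverse hy hyc hyb hpq (by grind) (by grind)
  exact isClawFree_iff.1 hclaw _ _ _ _ (hC.of_diamondReduce hCx hCy)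

end Reduce

end Multigraph

theorem stmt10_general {V : Type*} [Fintype V] [DecidableEq V] (G : Multigraph V)
    (hconn : G.Connected) (hclaw : G.IsClawFree) (hcubic : G.IsCubic)
    (a b c d x y : V) (hdiam : G.IsDiamond a b c d)
    (hx : G.Adj a x) (hxo : x ∉ ({a, b, c, d} : Finset V))
    (hy : G.Adj d y) (hyo : y ∉ ({a, b, c, d} : Finset V)) :
    (G.diamondReduce a b c d x y).Connected ∧
    (G.diamondReduce a b c d x y).IsClawFree ∧
    (G.diamondReduce a b c d x y).IsCubic := by
  obtain ⟨-, hxb, hxc, -⟩ : x ≠ a ∧ x ≠ b ∧ x ≠ c ∧ x ≠ d := by simpa using hxo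
  obtain ⟨-, hyb, hyc, -⟩ : y ≠ a ∧ y ≠ b ∧ y ≠ c ∧ y ≠ d := by simpa using hyo
  have hxy : x ≠ y := hclaw.ne_of_diamond hcubic hdiam hx hxb hxc hy hyb hyc
  exact ⟨hcubic.connected_diamondReduce hconn hdiam hx hxo hy hyo,
    hclaw.diamondReduce hcubic hdiam hx hxo hy hyo,
    hcubic.diamondReduce hdiam hx hxo hy hyo hxy⟩

/-- The diamond reduction of a connected claw-free cubic multigraph (not
`K₄`) is again a connected claw-free cubic multigraph. -/
theorem stmt10 {V : Type*} [Fintype V] [DecidableEq V] (G : Multigraph V)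
    (hconn : G.Connected) (hclaw : G.IsClawFree) (hcubic : G.IsCubic)
    (hK4 : ¬ G.IsK4) (a b c d x y : V) (hdiam : G.IsDiamond a b c d)
    (hx : G.Adj a x) (hxo : x ∉ ({a, b, c, d} : Finset V))
    (hy : G.Adj d y) (hyo : y ∉ ({a, b, c, d} : Finset V)) :
    (G.diamondReduce a b c d x y).Connected ∧
    (G.diamondReduce a b c d x y).IsClawFree ∧
    (G.diamondReduce a b c d x y).IsCubic :=
  stmt10_general G hconn hclaw hcubic a b c d x y hdiam hx hxo hy hyo
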